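/- arXiv:1102.0873 — 3 statements merged into one kernel-verified Lean document; each statement's English description precedes it below -/
import Mathlib

section
/- For every 4×4 upper unitriangular complex matrix x (ones on the diagonal, zeros below the diagonal), the determinant of the 2×2 submatrix of x with rows {1,3} and columns {3,4} equals x_{12} times the determinant of the 3×3 submatrix with rows {1,2,3} and columns {1,3,4}, minus the determinant of the 3×3 submatrix with rows {1,2,3} and columns {2,3,4}. -/
/-! Expanding the minor with columns `{2,3,4}` along its first column `(x₁₂, 1, 0)` gives
`x₁₂ · D_{23,34} − D_{13,34}`, while the minor with columns `{1,3,4}` has first column `(1, 0, 0)`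
and so equals `D_{23,34}`. -/

namespace Matrix

theorem det_submatrix_fin_three_eq_expand_first_column {m n R : Type*} [CommRing R]
    (x : Matrix m n R) (a b c : m) (p q r : n) :
    (x.submatrix ![a, b, c] ![p, q, r]).det =
      x a p * (x.submatrix ![b, c] ![q, r]).det - x b p * (x.submatrix ![a, c] ![q, r]).det +
        x c p * (x.submatrix ![a, b] ![q, r]).det := by
  rw [det_fin_three, det_fin_two, det_fin_two, det_fin_two]
  simp only [submatrix_apply, cons_val_zero, cons_val_one, cons_val_two,
    head_cons, tail_cons]
  ring

end Matrix

/-- For every 4×4 upper unitriangular complex matrix `x`, the minor with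
rows `{1,3}` and columns `{3,4}` equals `x₁₂` times the minor with rows `{1,2,3}` and
columns `{1,3,4}`, minus the minor with rows `{1,2,3}` and columns `{2,3,4}`.
(Indices are 0-based in the formalization: rows `{1,3}` are `![0,2]`, etc.) -/
theorem minor_13_34_eq
    (x : Matrix (Fin 4) (Fin 4) ℂ)
    (hdiag : ∀ i, x i i = 1)
    (hlow : ∀ i j : Fin 4, j < i → x i j = 0) :
    (x.submatrix ![0, 2] ![2, 3]).det =
      x 0 1 * (x.submatrix ![0, 1, 2] ![0, 2, 3]).det -
        (x.submatrix ![0, 1, 2] ![1, 2, 3]).det := by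
  rw [Matrix.det_submatrix_fin_three_eq_expand_first_column,
    Matrix.det_submatrix_fin_three_eq_expand_first_column, hdiag 0, hdiag 1,
    hlow 1 0 (by decide), hlow 2 0 (by decide), hlow 2 1 (by decide)]
  ring
end

section
/- Let n be the 4×4 upper unitriangular real matrix with above-diagonal entries n_{12}, n_{13}, n_{14}, n_{24}, n_{34} and n_{23} = 0, and for i = 1,2,3 set x_i(t) := I + t·E_{i,i+1}. Then the following are equivalent: (a) there exist t ∈ ℝ and t_1,…,t_6 > 0 such that x_2(t)·n = x_2(t_1)x_1(t_2)x_3(t_3)x_2(t_4)x_1(t_5)x_3(t_6); (b) n_{34} > 0, n_{12} > 0, n_{14} > 0, n_{13}n_{34} − n_{14} > 0, and n_{14} − n_{13}n_{34} − n_{12}n_{24} > 0. -/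
/-!
Both products are unitriangular and can be multiplied out. Left multiplication by `x₂(t)` only
changes the entries `(2,3)` and `(2,4)`, so comparing entries shows that `n` lies in the image
exactly when `n₁₂ = t₂ + t₅`, `n₁₃ = t₂t₄`, `n₁₄ = t₂t₄t₆`, `n₂₄ = -t₃t₄` and `n₃₄ = t₃ + t₆`,
with `t₁` free. In these coordinates the five quantities of (b) become the monomial sums
`t₃ + t₆`, `t₂ + t₅`, `t₂t₄t₆`, `t₂t₃t₄` and `t₃t₄t₅`, and conversely the equations can be
solved for positive `t₂, …, t₆` as soon as those quantities are positive.
-/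

open Matrix

section Multiplication

variable {R : Type*} [CommRing R]

lemma transvection_word_213213_eq (t₁ t₂ t₃ t₄ t₅ t₆ : R) :
    transvection (1 : Fin 4) 2 t₁ * transvection 0 1 t₂ * transvection 2 3 t₃ *
        transvection 1 2 t₄ * transvection 0 1 t₅ * transvection 2 3 t₆ =
      !![1, t₂ + t₅, t₂ * t₄, t₂ * t₄ * t₆;
         0, 1, t₁ + t₄, t₁ * t₃ + (t₁ + t₄) * t₆;
         0, 0, 1, t₃ + t₆;
         0, 0, 0, 1] := by
  ext i j
  fin_cases i <;> fin_cases j <;>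
    simp [transvection, mul_apply, Fin.sum_univ_four, single_apply, one_apply] <;> ring

lemma transvection_one_two_mul_eq (t n₁₂ n₁₃ n₁₄ n₂₄ n₃₄ : R) :
    transvection (1 : Fin 4) 2 t * !![1, n₁₂, n₁₃, n₁₄; 0, 1, 0, n₂₄; 0, 0, 1, n₃₄; 0, 0, 0, 1] =
      !![1, n₁₂, n₁₃, n₁₄; 0, 1, t, n₂₄ + t * n₃₄; 0, 0, 1, n₃₄; 0, 0, 0, 1] := by
  ext i j
  fin_cases i <;> fin_cases j <;>
    simp [transvection, mul_apply, Fin.sum_univ_four, single_apply, one_apply]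

lemma transvection_mul_eq_word_213213_iff (t t₁ t₂ t₃ t₄ t₅ t₆ n₁₂ n₁₃ n₁₄ n₂₄ n₃₄ : R) :
    transvection (1 : Fin 4) 2 t * !![1, n₁₂, n₁₃, n₁₄; 0, 1, 0, n₂₄; 0, 0, 1, n₃₄; 0, 0, 0, 1] =
        transvection 1 2 t₁ * transvection 0 1 t₂ * transvection 2 3 t₃ *
          transvection 1 2 t₄ * transvection 0 1 t₅ * transvection 2 3 t₆ ↔
      t = t₁ + t₄ ∧ n₁₂ = t₂ + t₅ ∧ n₁₃ = t₂ * t₄ ∧ n₁₄ = t₂ * t₄ * t₆ ∧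
        n₂₄ = -(t₃ * t₄) ∧ n₃₄ = t₃ + t₆ := by
  rw [transvection_one_two_mul_eq, transvection_word_213213_eq]
  constructor
  · intro h
    rw [← Matrix.ext_iff] at h
    have h₁₂ := h 0 1; have h₁₃ := h 0 2; have h₁₄ := h 0 3
    have h₂₃ := h 1 2; have h₂₄ := h 1 3; have h₃₄ := h 2 3
    simp only [of_apply, cons_val, cons_val_zero, cons_val_one] at h₁₂ h₁₃ h₁₄ h₂₃ h₂₄ h₃₄
    subst h₂₃ h₃₄
    exact ⟨rfl, h₁₂, h₁₃, h₁₄, by linear_combination h₂₄, rfl⟩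
  · rintro ⟨rfl, rfl, rfl, rfl, rfl, rfl⟩
    ring_nf

end Multiplication

lemma flag_minors_pos_of_params_pos {R : Type*} [CommRing R] [LinearOrder R]
    [IsStrictOrderedRing R] {t₂ t₃ t₄ t₅ t₆ : R} (h₂ : 0 < t₂) (h₃ : 0 < t₃) (h₄ : 0 < t₄)
    (h₅ : 0 < t₅) (h₆ : 0 < t₆) :
    0 < t₃ + t₆ ∧ 0 < t₂ + t₅ ∧ 0 < t₂ * t₄ * t₆ ∧ 0 < t₂ * t₄ * (t₃ + t₆) - t₂ * t₄ * t₆ ∧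
      0 < t₂ * t₄ * t₆ - t₂ * t₄ * (t₃ + t₆) - (t₂ + t₅) * -(t₃ * t₄) := by
  have hC : t₂ * t₄ * (t₃ + t₆) - t₂ * t₄ * t₆ = t₂ * t₃ * t₄ := by ring
  have hD : t₂ * t₄ * t₆ - t₂ * t₄ * (t₃ + t₆) - (t₂ + t₅) * -(t₃ * t₄) = t₃ * t₄ * t₅ := by ring
  rw [hC, hD]
  exact ⟨by positivity, by positivity, by positivity, by positivity, by positivity⟩

lemma exists_params_pos_of_flag_minors_pos {K : Type*} [Field K] [LinearOrder K]
    [IsStrictOrderedRing K] {n₁₂ n₁₃ n₁₄ n₂₄ n₃₄ : K} (h₃₄ : 0 < n₃₄) (h₁₂ : 0 < n₁₂)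
    (h₁₄ : 0 < n₁₄) (hC : 0 < n₁₃ * n₃₄ - n₁₄) (hD : 0 < n₁₄ - n₁₃ * n₃₄ - n₁₂ * n₂₄) :
    ∃ t₂ t₃ t₄ t₅ t₆ : K, 0 < t₂ ∧ 0 < t₃ ∧ 0 < t₄ ∧ 0 < t₅ ∧ 0 < t₆ ∧
      n₁₂ = t₂ + t₅ ∧ n₁₃ = t₂ * t₄ ∧ n₁₄ = t₂ * t₄ * t₆ ∧ n₂₄ = -(t₃ * t₄) ∧
        n₃₄ = t₃ + t₆ := by
  have h₁₃ : 0 < n₁₃ := by nlinarith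
  have h₂₄ : 0 < -n₂₄ := by nlinarith
  have hn₂₄ : n₂₄ ≠ 0 := by linarith
  -- solve `n₁₃n₃₄ - n₁₄ = t₂t₃t₄`, `n₁₄ - n₁₃n₃₄ - n₁₂n₂₄ = t₃t₄t₅`, `-n₂₄ = t₃t₄`, `n₁₃ = t₂t₄`
  refine ⟨(n₁₃ * n₃₄ - n₁₄) / -n₂₄, (n₁₃ * n₃₄ - n₁₄) / n₁₃, -n₂₄ * n₁₃ / (n₁₃ * n₃₄ - n₁₄),
    (n₁₄ - n₁₃ * n₃₄ - n₁₂ * n₂₄) / -n₂₄, n₁₄ / n₁₃, by positivity, by positivity,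
    by positivity, by positivity, by positivity, ?_, ?_, ?_, ?_, ?_⟩ <;>
    field_simp <;> ring

/-- Let `n` be the 4×4 upper unitriangular real matrix with
above-diagonal entries `n₁₂, n₁₃, n₁₄, n₂₄, n₃₄` and `n₂₃ = 0`, and
`x_i(t) := I + t·E_{i,i+1}`. The following are equivalent:
(a) there exist `t ∈ ℝ` and `t₁,…,t₆ > 0` with
    `x₂(t)·n = x₂(t₁)x₁(t₂)x₃(t₃)x₂(t₄)x₁(t₅)x₃(t₆)`;
(b) `n₃₄ > 0`, `n₁₂ > 0`, `n₁₄ > 0`, `n₁₃n₃₄ − n₁₄ > 0` and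
    `n₁₄ − n₁₃n₃₄ − n₁₂n₂₄ > 0`. -/
theorem totally_positive_flag_criterion_A3
    (n₁₂ n₁₃ n₁₄ n₂₄ n₃₄ : ℝ) :
    (let x₁ : ℝ → Matrix (Fin 4) (Fin 4) ℝ := fun t => 1 + Matrix.single 0 1 t
     let x₂ : ℝ → Matrix (Fin 4) (Fin 4) ℝ := fun t => 1 + Matrix.single 1 2 t
     let x₃ : ℝ → Matrix (Fin 4) (Fin 4) ℝ := fun t => 1 + Matrix.single 2 3 t
     let n : Matrix (Fin 4) (Fin 4) ℝ :=
       !![1, n₁₂, n₁₃, n₁₄; 0, 1, 0, n₂₄; 0, 0, 1, n₃₄; 0, 0, 0, 1]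
     ∃ t t₁ t₂ t₃ t₄ t₅ t₆ : ℝ, 0 < t₁ ∧ 0 < t₂ ∧ 0 < t₃ ∧ 0 < t₄ ∧ 0 < t₅ ∧ 0 < t₆ ∧
       x₂ t * n = x₂ t₁ * x₁ t₂ * x₃ t₃ * x₂ t₄ * x₁ t₅ * x₃ t₆) ↔
    (0 < n₃₄ ∧ 0 < n₁₂ ∧ 0 < n₁₄ ∧ 0 < n₁₃ * n₃₄ - n₁₄ ∧
      0 < n₁₄ - n₁₃ * n₃₄ - n₁₂ * n₂₄) := by
  show (∃ t t₁ t₂ t₃ t₄ t₅ t₆ : ℝ, 0 < t₁ ∧ 0 < t₂ ∧ 0 < t₃ ∧ 0 < t₄ ∧ 0 < t₅ ∧ 0 < t₆ ∧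
      transvection 1 2 t * !![1, n₁₂, n₁₃, n₁₄; 0, 1, 0, n₂₄; 0, 0, 1, n₃₄; 0, 0, 0, 1] =
        transvection 1 2 t₁ * transvection 0 1 t₂ * transvection 2 3 t₃ *
          transvection 1 2 t₄ * transvection 0 1 t₅ * transvection 2 3 t₆) ↔ _
  simp only [transvection_mul_eq_word_213213_iff]
  constructor
  · rintro ⟨t, t₁, t₂, t₃, t₄, t₅, t₆, -, h₂, h₃, h₄, h₅, h₆, -, rfl, rfl, rfl, rfl, rfl⟩
    exact flag_minors_pos_of_params_pos h₂ h₃ h₄ h₅ h₆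
  · rintro ⟨h₃₄, h₁₂, h₁₄, hC, hD⟩
    obtain ⟨t₂, t₃, t₄, t₅, t₆, h₂, h₃, h₄, h₅, h₆, hparams⟩ :=
      exists_params_pos_of_flag_minors_pos h₃₄ h₁₂ h₁₄ hC hD
    exact ⟨1 + t₄, 1, t₂, t₃, t₄, t₅, t₆, one_pos, h₂, h₃, h₄, h₅, h₆, rfl, hparams⟩
end

section
/- Let n be the 4×4 real matrix with rows (1,1,1,2), (0,1,0,−1), (0,0,1,1), (0,0,0,1), and for i = 1,2,3 set x_i(t) := I + t·E_{i,i+1}. Then the six Plücker minors of n — the entries (1,2), (1,3), (1,4), and the 3×3 minors with rows {1,2,3} and columns {1,2,4}, {1,3,4}, {2,3,4} respectively — are all positive, and yet for every t ∈ ℝ and all t_1,…,t_6 > 0 one has x_2(t)·n ≠ x_2(t_1)x_1(t_2)x_3(t_3)x_2(t_4)x_1(t_5)x_3(t_6). (Hence the flag π_K(n) has all Plücker coordinates positive but is not totally positive.) -/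
/-!
Left multiplication by `x₂(t)` changes only the second row, so `x₂(t)·n` keeps the entries
`(1,3) = 1`, `(1,4) = 2` and `(3,4) = 1` of `n` (1-based indices). In the product
`x₂(t₁)x₁(t₂)x₃(t₃)x₂(t₄)x₁(t₅)x₃(t₆)` these entries are `t₂t₄`, `t₂t₄t₆` and `t₃ + t₆`,
which forces `t₆ = 2` and then `t₃ = -1 < 0`.
-/

open Matrix

-- `x_i(t)` is definitionally `transvection (i-1) i t`; `P` is the product for the word (2,1,3,2,1,3).
theorem transvection_word_apply {R : Type*} [CommRing R] (t₁ t₂ t₃ t₄ t₅ t₆ : R) :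
    let P : Matrix (Fin 4) (Fin 4) R :=
      transvection 1 2 t₁ * transvection 0 1 t₂ * transvection 2 3 t₃ *
        transvection 1 2 t₄ * transvection 0 1 t₅ * transvection 2 3 t₆
    P 0 2 = t₂ * t₄ ∧ P 0 3 = t₂ * t₄ * t₆ ∧ P 2 3 = t₃ + t₆ := by
  intro P
  simp only [P, mul_transvection_apply_of_ne, mul_transvection_apply_same, ne_eq, Fin.reduceEq,
    not_false_eq_true]
  refine ⟨?_, ?_, ?_⟩ <;> simp [transvection, one_apply] <;> ring

/-- The 4×4 matrix with rows `(1,1,1,2), (0,1,0,−1), (0,0,1,1), (0,0,0,1)`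
has all six Plücker minors positive — the entries `(1,2)`, `(1,3)`, `(1,4)` and the 3×3
minors with rows `{1,2,3}` and columns `{1,2,4}`, `{1,3,4}`, `{2,3,4}` — and yet for every
`t ∈ ℝ` and all `t₁,…,t₆ > 0`,
`x₂(t)·n ≠ x₂(t₁)x₁(t₂)x₃(t₃)x₂(t₄)x₁(t₅)x₃(t₆)`, where `x_i(t) := I + t·E_{i,i+1}`.
(Hence the corresponding flag has positive Plücker coordinates but is not totally
positive.  Indices are 0-based in the formalization.) -/
theorem pluecker_positive_but_not_totally_positive :
    let x₁ : ℝ → Matrix (Fin 4) (Fin 4) ℝ := fun t => 1 + Matrix.single 0 1 t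
    let x₂ : ℝ → Matrix (Fin 4) (Fin 4) ℝ := fun t => 1 + Matrix.single 1 2 t
    let x₃ : ℝ → Matrix (Fin 4) (Fin 4) ℝ := fun t => 1 + Matrix.single 2 3 t
    let n : Matrix (Fin 4) (Fin 4) ℝ :=
      !![1, 1, 1, 2; 0, 1, 0, -1; 0, 0, 1, 1; 0, 0, 0, 1]
    (0 < n 0 1 ∧ 0 < n 0 2 ∧ 0 < n 0 3 ∧
      0 < (n.submatrix ![0, 1, 2] ![0, 1, 3]).det ∧
      0 < (n.submatrix ![0, 1, 2] ![0, 2, 3]).det ∧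
      0 < (n.submatrix ![0, 1, 2] ![1, 2, 3]).det) ∧
    ∀ t t₁ t₂ t₃ t₄ t₅ t₆ : ℝ, 0 < t₁ → 0 < t₂ → 0 < t₃ → 0 < t₄ → 0 < t₅ → 0 < t₆ →
      x₂ t * n ≠ x₂ t₁ * x₁ t₂ * x₃ t₃ * x₂ t₄ * x₁ t₅ * x₃ t₆ := by
  intro x₁ x₂ x₃ n
  refine ⟨?_, ?_⟩
  · simp only [n, det_fin_three, submatrix_apply]
    norm_num [cons_val_two, cons_val_three]
  intro t t₁ t₂ t₃ t₄ t₅ t₆ _ _ h₃ _ _ _ h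
  have word := transvection_word_apply t₁ t₂ t₃ t₄ t₅ t₆
  have entry (i j : Fin 4) (hi : i ≠ 1) :
      n i j = (x₂ t₁ * x₁ t₂ * x₃ t₃ * x₂ t₄ * x₁ t₅ * x₃ t₆) i j :=
    (transvection_mul_apply_of_ne 1 2 i j hi t n).symm.trans (congrFun₂ h i j)
  have h02 : (1 : ℝ) = t₂ * t₄ := (entry 0 2 (by decide)).trans word.1
  have h03 : (2 : ℝ) = t₂ * t₄ * t₆ := (entry 0 3 (by decide)).trans word.2.1
  have h23 : (1 : ℝ) = t₃ + t₆ := (entry 2 3 (by decide)).trans word.2.2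
  have ht₆ : t₆ = 2 := by rwa [← h02, one_mul, eq_comm] at h03
  linarith
end
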